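/- arXiv:1404.0783 — 3 statements merged into one kernel-verified Lean document; each statement's English description precedes it below -/
import Mathlib

section
/- An E3-SAT instance with n variables and m clauses is satisfiable if and only if the corresponding MWTM instance (constructed via the standard reduction with n + m tasks and 0/1 weights) admits a feasible assignment of total weight n + m. -/
/-- Nodes of the tree in the E3-SAT → MWTM reduction: the root, two variable
nodes per variable (`var i true` for `x_i`, `var i false` for `¬x_i`), and a
literal node `lit p q` for the `q`-th literal occurrence of clause `C_p`. -/
inductive RNode (n m : ℕ) : Type where
  | root : RNode n m
  | var : Fin n → Bool → RNode n m
  | lit : Fin m → Fin 3 → RNode n m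
  deriving DecidableEq

/-- `C p q` is the `q`-th literal of clause `p`: a variable and a sign
(`true` for the positive literal `x_i`, `false` for `¬x_i`). -/
def parentR {n m : ℕ} (C : Fin m → Fin 3 → Fin n × Bool) :
    RNode n m → RNode n m
  | .root => .root
  | .var _ _ => .root
  | .lit p q => .var (C p q).1 (C p q).2

/-- A leaf: a node with no children. -/
def IsLeafR {n m : ℕ} (C : Fin m → Fin 3 → Fin n × Bool) (v : RNode n m) :
    Prop := ∀ u : RNode n m, parentR C u = v → u = v

/-- Weak ancestor relation in the reduction tree. -/
def AncR {n m : ℕ} (C : Fin m → Fin 3 → Fin n × Bool)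
    (u v : RNode n m) : Prop :=
  u = v ∨ u = RNode.root ∨
    ∃ p q, v = RNode.lit p q ∧ u = RNode.var (C p q).1 (C p q).2

/-- The 0/1 weights of the reduction: a variable node gets weight 1 only on
its enforcement task, a literal node gets weight 1 only on the clausal task
of its clause. Tasks are `Sum.inl p` (clausal) and `Sum.inr i` (enforcement). -/
def wR {n m : ℕ} : RNode n m → (Fin m ⊕ Fin n) → ℕ
  | .var i _, .inr i' => if i = i' then 1 else 0
  | .lit p _, .inl p' => if p = p' then 1 else 0
  | _, _ => 0

/-- A feasible assignment: an injection from the `n + m` tasks to nodes whose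
image is an antichain w.r.t. the ancestor relation. -/
def FeasibleR {n m : ℕ} (C : Fin m → Fin 3 → Fin n × Bool)
    (f : (Fin m ⊕ Fin n) → RNode n m) : Prop :=
  Function.Injective f ∧
    ∀ t₁ t₂ : Fin m ⊕ Fin n, t₁ ≠ t₂ → ¬ AncR C (f t₁) (f t₂)

/-- Satisfiability of the E3-SAT instance `C`. -/
def SatisfiableC {n m : ℕ} (C : Fin m → Fin 3 → Fin n × Bool) : Prop :=
  ∃ a : Fin n → Bool, ∀ p : Fin m, ∃ q : Fin 3, a (C p q).1 = (C p q).2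


/-!
A satisfying assignment `a` yields an assignment of weight `n + m`: send the enforcement task of
`x_i` to the node of the literal that is *false* under `a`, and each clausal task to the node of a
literal occurrence that is true under `a`; since that occurrence does not hang below the false
variable node, the image is an antichain. Conversely, all weights are at most `1`, so weight
`n + m` forces every task onto a node of weight `1`: enforcement task `i` sits on some `var i b`,
clausal task `p` on some `lit p q`, and the antichain condition says `C p q ≠ (i, b)`. Hence
`a i := !b` satisfies every clause.
-/

namespace RNode

variable {n m : ℕ} {C : Fin m → Fin 3 → Fin n × Bool}

theorem ancR_var_lit_iff {i : Fin n} {b : Bool} {p : Fin m} {q : Fin 3} :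
    AncR C (var i b) (lit p q) ↔ C p q = (i, b) := by
  simp [AncR, Prod.ext_iff, eq_comm]

theorem ancR_var_var_iff {i i' : Fin n} {b b' : Bool} :
    AncR C (var i b : RNode n m) (var i' b') ↔ i = i' ∧ b = b' := by
  simp [AncR]

theorem ancR_lit_lit_iff {p p' : Fin m} {q q' : Fin 3} :
    AncR C (lit p q) (lit p' q') ↔ p = p' ∧ q = q' := by
  simp [AncR]

theorem not_ancR_lit_var {p : Fin m} {q : Fin 3} {i : Fin n} {b : Bool} :
    ¬ AncR C (lit p q) (var i b) := by
  simp [AncR]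

theorem wR_le_one (v : RNode n m) (t : Fin m ⊕ Fin n) : wR v t ≤ 1 := by
  rcases v with _ | ⟨i, b⟩ | ⟨p, q⟩ <;> rcases t with p' | i' <;> simp only [wR] <;>
    first | omega | split_ifs <;> omega

theorem wR_inr_eq_one_iff {v : RNode n m} {i : Fin n} :
    wR v (.inr i) = 1 ↔ ∃ b, v = var i b := by
  rcases v with _ | ⟨i', b⟩ | ⟨p, q⟩ <;> simp [wR, eq_comm]

theorem wR_inl_eq_one_iff {v : RNode n m} {p : Fin m} :
    wR v (.inl p) = 1 ↔ ∃ q, v = lit p q := by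
  rcases v with _ | ⟨i, b⟩ | ⟨p', q⟩ <;> simp [wR, eq_comm]

end RNode

theorem Fintype.sum_eq_card_iff_of_le_one {ι : Type*} [Fintype ι] {g : ι → ℕ}
    (hg : ∀ i, g i ≤ 1) : ∑ i, g i = Fintype.card ι ↔ ∀ i, g i = 1 := by
  rw [Fintype.card_eq_sum_ones, Finset.sum_eq_sum_iff_of_le fun i _ => hg i]
  simp

section Reduction

open RNode

variable {n m : ℕ} {C : Fin m → Fin 3 → Fin n × Bool}

def taskAssignment (a : Fin n → Bool) (q : Fin m → Fin 3) : Fin m ⊕ Fin n → RNode n m :=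
  Sum.elim (fun p => lit p (q p)) (fun i => var i (!a i))

theorem feasibleR_taskAssignment {a : Fin n → Bool} {q : Fin m → Fin 3}
    (hq : ∀ p, a (C p (q p)).1 = (C p (q p)).2) : FeasibleR C (taskAssignment a q) := by
  refine ⟨?_, ?_⟩
  · rintro (p | i) (p' | i') h <;> simp_all [taskAssignment]
  · rintro (p | i) (p' | i') hne <;> simp only [taskAssignment, Sum.elim_inl, Sum.elim_inr]
    · rw [ancR_lit_lit_iff]
      rintro ⟨rfl, -⟩
      exact hne rfl
    · exact not_ancR_lit_var
    · rw [ancR_var_lit_iff]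
      intro h
      have h_true := hq p'
      rw [h] at h_true
      exact Bool.not_ne_self _ h_true.symm
    · rw [ancR_var_var_iff]
      rintro ⟨rfl, -⟩
      exact hne rfl

theorem sum_wR_taskAssignment (a : Fin n → Bool) (q : Fin m → Fin 3) :
    ∑ t, wR (taskAssignment a q t) t = n + m := by
  simp [Fintype.sum_sum_type, taskAssignment, wR, add_comm]

theorem satisfiableC_of_feasibleR_of_wR_eq_one {f : Fin m ⊕ Fin n → RNode n m}
    (hf : FeasibleR C f) (hw : ∀ t, wR (f t) t = 1) : SatisfiableC C := by
  choose b hb using fun i => wR_inr_eq_one_iff.1 (hw (.inr i))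
  choose q hq using fun p => wR_inl_eq_one_iff.1 (hw (.inl p))
  refine ⟨fun i => !b i, fun p => ⟨q p, ?_⟩⟩
  have hanti := hf.2 (.inr (C p (q p)).1) (.inl p) Sum.inr_ne_inl
  rw [hb, hq, ancR_var_lit_iff] at hanti
  exact (Bool.eq_not.2 fun h => hanti (Prod.ext rfl h)).symm

end Reduction

/-- An E3-SAT instance with `n` variables and `m` clauses is
satisfiable iff the reduced MWTM instance admits a feasible assignment of
total weight `n + m`. -/
theorem e3sat_iff_mwtm (n m : ℕ) (C : Fin m → Fin 3 → Fin n × Bool) :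
    SatisfiableC C ↔
      ∃ f : (Fin m ⊕ Fin n) → RNode n m, FeasibleR C f ∧
        ∑ t : Fin m ⊕ Fin n, wR (f t) t = n + m := by
  constructor
  · rintro ⟨a, ha⟩
    choose q hq using ha
    exact ⟨taskAssignment a q, feasibleR_taskAssignment hq, sum_wR_taskAssignment a q⟩
  · rintro ⟨f, hf, hsum⟩
    have hcard : Fintype.card (Fin m ⊕ Fin n) = n + m := by simp [add_comm]
    rw [← hcard, Fintype.sum_eq_card_iff_of_le_one fun t => RNode.wR_le_one _ t] at hsum
    exact satisfiableC_of_feasibleR_of_wR_eq_one hf hsum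
end

section
/- In a weight-(n+m) solution to the reduced MWTM instance, for each variable x_i exactly one of the nodes 2i (x_i) and 2i+1 (¬x_i) receives the enforcement task m+i, and every clausal task assigned to a literal node must use a literal node that is a child of the unassigned variable node's sibling side, i.e., no clausal task is assigned to a literal node whose parent variable node is assigned; hence the induced truth assignment (x_i true iff node 2i+1 carries task m+i) satisfies every clause. -/
/-!
Each of the `n + m` tasks gains weight at most `1`, so a total of `n + m` forces weight exactly `1`
everywhere: enforcement task `i` sits on `x_i` or `¬x_i`, and clausal task `p` on a literal node of
`C_p`. The literal node carrying task `p` has the variable node of its literal as parent, so by the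
antichain condition that variable node is free, i.e. task `i` sits on the opposite sign; reading
`x_i` as true iff `¬x_i` carries task `i` then makes that literal true.
-/

theorem Fintype.eq_one_of_sum_eq_card {ι : Type*} [Fintype ι] {g : ι → ℕ}
    (hle : ∀ i, g i ≤ 1) (hsum : ∑ i, g i = Fintype.card ι) (i : ι) : g i = 1 :=
  (Finset.sum_eq_sum_iff_of_le fun i _ => hle i).1 (by simpa using hsum) i (Finset.mem_univ i)

section Reduction

variable {n m : ℕ}

theorem wR_le_one (v : RNode n m) (t : Fin m ⊕ Fin n) : wR v t ≤ 1 := by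
  unfold wR
  split <;> (try split) <;> omega

theorem wR_inr_eq_one_iff {v : RNode n m} {i : Fin n} :
    wR v (Sum.inr i) = 1 ↔ ∃ b, v = RNode.var i b := by
  cases v <;> simp [wR, eq_comm]

theorem wR_inl_eq_one_iff {v : RNode n m} {p : Fin m} :
    wR v (Sum.inl p) = 1 ↔ ∃ q, v = RNode.lit p q := by
  cases v <;> simp [wR, eq_comm]

theorem FeasibleR.var_ne_of_lit {C : Fin m → Fin 3 → Fin n × Bool}
    {f : (Fin m ⊕ Fin n) → RNode n m} (hf : FeasibleR C f) (p : Fin m) (q : Fin 3)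
    (hpq : f (Sum.inl p) = RNode.lit p q) :
    f (Sum.inr (C p q).1) ≠ RNode.var (C p q).1 (C p q).2 := fun hvar =>
  hf.2 (Sum.inr (C p q).1) (Sum.inl p) Sum.inr_ne_inl (Or.inr (Or.inr ⟨p, q, hpq, hvar⟩))

end Reduction

/-- In a weight-`(n+m)` solution of the reduced MWTM instance,
each enforcement task is carried by exactly one of the two variable nodes of
its variable; no clausal task is assigned to a literal node whose parent
variable node is assigned; hence the induced truth assignment (`x_i` true iff
the node for `¬x_i` carries task `m+i`) satisfies every clause. -/
theorem mwtm_solution_satisfies (n m : ℕ) (C : Fin m → Fin 3 → Fin n × Bool)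
    (f : (Fin m ⊕ Fin n) → RNode n m) (hf : FeasibleR C f)
    (hw : ∑ t : Fin m ⊕ Fin n, wR (f t) t = n + m) :
    (∀ i : Fin n, ∃! b : Bool, f (Sum.inr i) = RNode.var i b) ∧
      (∀ (p : Fin m) (q : Fin 3), f (Sum.inl p) = RNode.lit p q →
        f (Sum.inr (C p q).1) ≠ RNode.var (C p q).1 (C p q).2) ∧
      (∀ p : Fin m, ∃ q : Fin 3,
        (fun i : Fin n => decide (f (Sum.inr i) = RNode.var i false))
            (C p q).1 = (C p q).2) := by
  have hone : ∀ t, wR (f t) t = 1 :=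
    Fintype.eq_one_of_sum_eq_card (fun t => wR_le_one (f t) t) (by simpa [add_comm] using hw)
  have hvar (i : Fin n) : ∃ b, f (Sum.inr i) = RNode.var i b := wR_inr_eq_one_iff.1 (hone _)
  refine ⟨fun i => ?_, hf.var_ne_of_lit, fun p => ?_⟩
  · obtain ⟨b, hb⟩ := hvar i
    exact ⟨b, hb, fun b' hb' => by simpa [hb] using hb'.symm⟩
  · obtain ⟨q, hq⟩ := wR_inl_eq_one_iff.1 (hone (Sum.inl p))
    obtain ⟨b, hb⟩ := hvar (C p q).1
    have hsign : b ≠ (C p q).2 := by simpa [hb] using hf.var_ne_of_lit p q hq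
    exact ⟨q, by simpa [hb, Bool.eq_not_iff, eq_comm] using hsign⟩
end

section
/- If a feasible (possibly fractional) solution x to the LP relaxation of an MWTM instance exists, then the number of effective leaves with respect to x is at least the number of tasks m. -/
attribute [local instance] Classical.propDecidable

/-- A rooted tree on a finite vertex type `V`, given by a parent function. -/
structure OrgTree (V : Type) [Fintype V] [DecidableEq V] where
  root : V
  parent : V → V
  parent_root : parent root = root
  reach : ∀ v : V, ∃ k : ℕ, parent^[k] v = root

variable {V : Type} [Fintype V] [DecidableEq V]

/-- `T.Anc u v` : `u` is a (weak) ancestor of `v`, i.e. `u` lies on the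
path from the root to `v`. -/
def OrgTree.Anc (T : OrgTree V) (u v : V) : Prop :=
  ∃ k : ℕ, T.parent^[k] v = u

/-- A leaf is a node with no children. -/
def OrgTree.IsLeaf (T : OrgTree V) (v : V) : Prop :=
  ∀ u : V, T.parent u = v → u = v

/-- An antichain: no element is a (weak) ancestor of another distinct element. -/
def OrgTree.IsAntichain (T : OrgTree V) (S : Set V) : Prop :=
  ∀ u ∈ S, ∀ v ∈ S, u ≠ v → ¬ T.Anc u v

/-- Feasibility for the LP relaxation of the MWTM ILP:
nonnegativity, per-node sums at most 1, per-task sums equal to 1, and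
for every leaf the total assignment along the root-to-leaf path at most 1. -/
def LPFeasible (T : OrgTree V) (m : ℕ) (x : V → Fin m → ℝ) : Prop :=
  (∀ i j, 0 ≤ x i j) ∧
  (∀ i : V, ∑ j : Fin m, x i j ≤ 1) ∧
  (∀ j : Fin m, ∑ i : V, x i j = 1) ∧
  (∀ k : V, T.IsLeaf k →
    ∑ i ∈ Finset.univ.filter (fun i => T.Anc i k), ∑ j : Fin m, x i j ≤ 1)

/-- An effective leaf w.r.t. `x`: a node with a positive assignment none of
whose strict descendants has a positive assignment. -/
def EffLeaf (T : OrgTree V) (m : ℕ) (x : V → Fin m → ℝ) (i : V) : Prop :=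
  (∃ j : Fin m, 0 < x i j) ∧
    ∀ v : V, T.Anc i v → v ≠ i → ∀ j : Fin m, x v j = 0

/-!
Every node carrying positive mass lies on the root path of some effective leaf, so the total
mass `m` of `x` is covered by the root paths of the effective leaves. Each such path extends to
a root-to-leaf path, hence carries mass at most `1`; therefore there are at least `m` effective
leaves.
-/

open Finset

namespace OrgTree

variable (T : OrgTree V)

noncomputable def ancestors (v : V) : Finset V :=
  univ.filter (fun i => T.Anc i v)

variable {T}

@[simp]
lemma mem_ancestors {u v : V} : u ∈ T.ancestors v ↔ T.Anc u v := by
  simp [ancestors]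

lemma Anc.refl (v : V) : T.Anc v v := ⟨0, rfl⟩

lemma Anc.trans {u v w : V} (huv : T.Anc u v) (hvw : T.Anc v w) : T.Anc u w := by
  obtain ⟨a, rfl⟩ := huv
  obtain ⟨b, rfl⟩ := hvw
  exact ⟨a + b, Function.iterate_add_apply _ _ _ _⟩

lemma eq_root_of_isPeriodicPt {v : V} {n : ℕ} (hv : Function.IsPeriodicPt T.parent n v)
    (hn : 0 < n) : v = T.root := by
  obtain ⟨k, hk⟩ := T.reach v
  have hkn : k ≤ n * k := Nat.le_mul_of_pos_left k hn
  calc v = T.parent^[n * k] v := ((hv.mul_const k).eq).symm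
    _ = T.parent^[n * k - k] (T.parent^[k] v) := by
        rw [← Function.iterate_add_apply, Nat.sub_add_cancel hkn]
    _ = T.root := by rw [hk, Function.iterate_fixed T.parent_root]

-- A cycle of the parent map can only be the loop at the root.
lemma Anc.antisymm {u v : V} (huv : T.Anc u v) (hvu : T.Anc v u) : u = v := by
  obtain ⟨a, rfl⟩ := huv
  obtain ⟨b, hb⟩ := hvu
  rcases Nat.eq_zero_or_pos (a + b) with hab | hab
  · rw [Nat.eq_zero_of_add_eq_zero_right hab, Function.iterate_zero_apply]
  have hperiodic : Function.IsPeriodicPt T.parent (a + b) v := by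
    rw [Function.IsPeriodicPt, Function.IsFixedPt, add_comm, Function.iterate_add_apply, hb]
  rw [eq_root_of_isPeriodicPt hperiodic hab, Function.iterate_fixed T.parent_root]

lemma card_ancestors_lt {u v : V} (huv : T.Anc u v) (hne : v ≠ u) :
    #(T.ancestors u) < #(T.ancestors v) := by
  have hsub : T.ancestors u ⊆ T.ancestors v := fun w hw =>
    mem_ancestors.2 ((mem_ancestors.1 hw).trans huv)
  refine card_lt_card ((ssubset_iff_of_subset hsub).2 ⟨v, mem_ancestors.2 (Anc.refl v), ?_⟩)
  exact fun hv => hne ((mem_ancestors.1 hv).antisymm huv)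

lemma exists_anc_and_forall_strict_desc_not {P : V → Prop} {v : V} (hv : P v) :
    ∃ w, T.Anc v w ∧ P w ∧ ∀ u, T.Anc w u → u ≠ w → ¬ P u := by
  obtain ⟨w, hw, hmax⟩ := (univ.filter fun w => T.Anc v w ∧ P w).exists_max_image
    (fun w => #(T.ancestors w)) ⟨v, by simp [hv, Anc.refl]⟩
  rw [mem_filter] at hw
  refine ⟨w, hw.2.1, hw.2.2, fun u hwu hne hu => ?_⟩
  have hle := hmax u (mem_filter.2 ⟨mem_univ u, hw.2.1.trans hwu, hu⟩)
  exact (card_ancestors_lt hwu hne).not_ge hle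

lemma exists_isLeaf_anc (v : V) : ∃ k, T.IsLeaf k ∧ T.Anc v k := by
  obtain ⟨k, hvk, -, hmax⟩ :=
    exists_anc_and_forall_strict_desc_not (T := T) (P := fun _ => True) (v := v) trivial
  exact ⟨k, fun u hu => by_contra fun hne => hmax u ⟨1, hu⟩ hne trivial, hvk⟩

lemma sum_le_sum_sum_ancestors (f : V → ℝ) (hf : ∀ i, 0 ≤ f i) (E : Finset V)
    (hcover : ∀ i, f i ≠ 0 → ∃ e ∈ E, T.Anc i e) :
    ∑ i, f i ≤ ∑ e ∈ E, ∑ i ∈ T.ancestors e, f i := by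
  rw [sum_comm' (t' := (univ : Finset V)) (s' := fun i => E.filter (T.Anc i)) (by simp)]
  refine sum_le_sum fun i _ => ?_
  rw [sum_const, nsmul_eq_mul]
  by_cases hi : f i = 0
  · simp [hi]
  obtain ⟨e, he, hie⟩ := hcover i hi
  have hcard : 1 ≤ #(E.filter (T.Anc i)) := card_pos.2 ⟨e, mem_filter.2 ⟨he, hie⟩⟩
  exact le_mul_of_one_le_left (hf i) (by exact_mod_cast hcard)

end OrgTree

open OrgTree

lemma exists_effLeaf_desc_of_pos {T : OrgTree V} {m : ℕ} {x : V → Fin m → ℝ}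
    (hx : ∀ i j, 0 ≤ x i j) {i : V} {j : Fin m} (hij : 0 < x i j) :
    ∃ e, EffLeaf T m x e ∧ T.Anc i e := by
  obtain ⟨e, hie, hpos, hmax⟩ :=
    exists_anc_and_forall_strict_desc_not (T := T) (P := fun v => ∃ j, 0 < x v j) ⟨j, hij⟩
  refine ⟨e, ⟨hpos, fun v hev hne j => ?_⟩, hie⟩
  exact (hx v j).eq_or_lt.resolve_right (fun hv => hmax v hev hne ⟨j, hv⟩) |>.symm

lemma sum_ancestors_le_one {T : OrgTree V} {m : ℕ} {x : V → Fin m → ℝ}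
    (hx : ∀ i j, 0 ≤ x i j)
    (hleaf : ∀ k, T.IsLeaf k → ∑ i ∈ T.ancestors k, ∑ j, x i j ≤ 1) (v : V) :
    ∑ i ∈ T.ancestors v, ∑ j, x i j ≤ 1 := by
  obtain ⟨k, hk, hvk⟩ := exists_isLeaf_anc (T := T) v
  refine le_trans (sum_le_sum_of_subset_of_nonneg (fun i hi => ?_) fun i _ _ => ?_) (hleaf k hk)
  · exact mem_ancestors.2 ((mem_ancestors.1 hi).trans hvk)
  · exact sum_nonneg fun j _ => hx i j

/-- If the LP relaxation of an MWTM instance has a feasible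
(possibly fractional) solution `x`, then the number of effective leaves
w.r.t. `x` is at least the number `m` of tasks. -/
theorem effLeaves_ge_tasks (T : OrgTree V) (m : ℕ) (x : V → Fin m → ℝ)
    (hx : LPFeasible T m x) :
    m ≤ {i : V | EffLeaf T m x i}.ncard := by
  obtain ⟨hnn, -, htask, hleaf⟩ := hx
  set E := univ.filter (EffLeaf T m x)
  have hcover : ∀ i, ∑ j, x i j ≠ 0 → ∃ e ∈ E, T.Anc i e := fun i hi => by
    obtain ⟨j, -, hj⟩ := exists_ne_zero_of_sum_ne_zero hi
    obtain ⟨e, he, hie⟩ := exists_effLeaf_desc_of_pos hnn ((hnn i j).lt_of_ne' hj)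
    exact ⟨e, mem_filter.2 ⟨mem_univ e, he⟩, hie⟩
  have hmass : (m : ℝ) ≤ #E := calc
    (m : ℝ) = ∑ i, ∑ j, x i j := by rw [sum_comm]; simp [htask]
    _ ≤ ∑ e ∈ E, ∑ i ∈ T.ancestors e, ∑ j, x i j :=
      sum_le_sum_sum_ancestors _ (fun i => sum_nonneg fun j _ => hnn i j) E hcover
    _ ≤ ∑ _e ∈ E, 1 := sum_le_sum fun e _ => sum_ancestors_le_one hnn hleaf e
    _ = #E := by simp
  rw [Set.ncard_eq_toFinset_card', Set.toFinset_ofPred]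
  exact_mod_cast hmass
end
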